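/- Let f_n : [0,1] → ℝ, n ∈ ℕ, be continuous convex functions with f_n(t) ≤ 0 for all t ∈ [0,1] and f_n(1) = 0, and suppose f_n converges uniformly on [0,1] to a function f. Then for every r > 0, the suprema H_n := sup_{0 ≤ t < 1} (−t r − f_n(t))/(1−t) and H := sup_{0 ≤ t < 1} (−t r − f(t))/(1−t) are finite, and lim_{n→∞} H_n = H. -/

import Mathlib

open Filter Set Topology

/-! Near `t = 1` the numerator `-t r - f(t)` tends to `-r < 0` while the denominator tends to `0⁺`,
so the ratio is eventually negative; since its value at `t = 0` is `-f(0) ≥ 0`, the supremum over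
`[0, 1)` is attained on a compact interval `[0, t₀]`. One `t₀` serves `g` and all `f n` with `n`
large, and on `[0, t₀]` the ratios converge uniformly because `1 / (1 - t) ≤ 1 / (1 - t₀)`. -/

noncomputable def hoeffdingRatio (r : ℝ) (h : ℝ → ℝ) (t : ℝ) : ℝ := (-t * r - h t) / (1 - t)

theorem sSup_image_le_sSup_image_add {α : Type*} {a b : α → ℝ} {s : Set α} (hs : s.Nonempty)
    (hb : BddAbove (b '' s)) {ε : ℝ} (h : ∀ t ∈ s, a t ≤ b t + ε) :
    sSup (a '' s) ≤ sSup (b '' s) + ε := by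
  refine csSup_le (hs.image a) ?_
  rintro _ ⟨t, ht, rfl⟩
  linarith [h t ht, le_csSup hb ⟨t, ht, rfl⟩]

theorem TendstoUniformlyOn.tendsto_sSup_image {ι α : Type*} {l : Filter ι} {F : ι → α → ℝ}
    {G : α → ℝ} {s : Set α} (hunif : TendstoUniformlyOn F G l s) (hs : s.Nonempty)
    (hF : ∀ᶠ n in l, BddAbove (F n '' s)) (hG : BddAbove (G '' s)) :
    Tendsto (fun n => sSup (F n '' s)) l (𝓝 (sSup (G '' s))) := by
  rw [Metric.tendsto_nhds]
  intro ε hε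
  filter_upwards [Metric.tendstoUniformlyOn_iff.1 hunif (ε / 2) (half_pos hε), hF]
    with n hclose hFn
  have hclose' : ∀ t ∈ s, |G t - F n t| < ε / 2 := fun t ht => by
    simpa only [Real.dist_eq] using hclose t ht
  have hle := sSup_image_le_sSup_image_add (a := F n) (ε := ε / 2) hs hG fun t ht => by
    linarith [(abs_lt.1 (hclose' t ht)).1]
  have hge := sSup_image_le_sSup_image_add (a := G) (ε := ε / 2) hs hFn fun t ht => by
    linarith [(abs_lt.1 (hclose' t ht)).2]
  rw [Real.dist_eq, abs_lt]
  constructor <;> linarith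

theorem hoeffdingRatio_nonpos {r : ℝ} {h : ℝ → ℝ} {t : ℝ} (ht : t < 1) (hh : -(t * r) < h t) :
    hoeffdingRatio r h t ≤ 0 :=
  div_nonpos_of_nonpos_of_nonneg (by linarith) (by linarith)

theorem ContinuousOn.hoeffdingRatio {h : ℝ → ℝ} {s : Set ℝ} (hc : ContinuousOn h s)
    (hs : (1 : ℝ) ∉ s) (r : ℝ) : ContinuousOn (_root_.hoeffdingRatio r h) s := by
  refine ContinuousOn.div (by fun_prop) (by fun_prop) fun t ht => sub_ne_zero.2 ?_
  rintro rfl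
  exact hs ht

theorem TendstoUniformlyOn.hoeffdingRatio {ι : Type*} {l : Filter ι} {f : ι → ℝ → ℝ}
    {g : ℝ → ℝ} {s : Set ℝ} {t₀ : ℝ} (hunif : TendstoUniformlyOn f g l s)
    (hs : ∀ t ∈ s, t ≤ t₀) (ht₀ : t₀ < 1) (r : ℝ) :
    TendstoUniformlyOn (fun n => _root_.hoeffdingRatio r (f n)) (_root_.hoeffdingRatio r g)
      l s := by
  rw [Metric.tendstoUniformlyOn_iff] at hunif ⊢
  intro ε hε
  have hgap : 0 < 1 - t₀ := sub_pos.2 ht₀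
  filter_upwards [hunif (ε * (1 - t₀)) (mul_pos hε hgap)] with n hn t ht
  have hgap_le : 1 - t₀ ≤ 1 - t := by linarith [hs t ht]
  calc dist (_root_.hoeffdingRatio r g t) (_root_.hoeffdingRatio r (f n) t)
      = dist (g t) (f n t) / (1 - t) := by
        rw [dist_comm (g t), Real.dist_eq, Real.dist_eq, _root_.hoeffdingRatio,
          _root_.hoeffdingRatio, ← sub_div, abs_div, abs_of_pos (hgap.trans_le hgap_le)]
        congr 2
        ring
    _ ≤ dist (g t) (f n t) / (1 - t₀) := div_le_div_of_nonneg_left dist_nonneg hgap hgap_le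
    _ < ε := (div_lt_iff₀ hgap).2 (hn t ht)

theorem exists_Ico_forall_neg_mul_add_lt {h : ℝ → ℝ} (hc : ContinuousWithinAt h (Icc 0 1) 1)
    (h1 : h 1 = 0) {r δ : ℝ} (hδ : δ < r) :
    ∃ t₀ ∈ Ico (0 : ℝ) 1, ∀ t ∈ Ico t₀ 1, -(t * r) + δ < h t := by
  have hlim : Tendsto (fun t => h t + t * r) (𝓝[<] 1) (𝓝 r) := by
    have hh : Tendsto h (𝓝[<] 1) (𝓝 0) :=
      h1 ▸ (hc.mono_of_mem_nhdsWithin (Icc_mem_nhdsLT zero_lt_one)).tendsto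
    simpa using hh.add ((tendsto_id.mono_left nhdsWithin_le_nhds).mul_const r)
  obtain ⟨l, hl, hsub⟩ := mem_nhdsLT_iff_exists_Ico_subset.1 (hlim.eventually_const_lt hδ)
  refine ⟨max 0 l, ⟨le_max_left _ _, max_lt one_pos hl⟩, fun t ht => ?_⟩
  have : δ < h t + t * r := hsub ⟨(le_max_right _ _).trans ht.1, ht.2⟩
  linarith

theorem exists_Ico_forall_neg_mul_lt_of_tendstoUniformlyOn {ι : Type*} {l : Filter ι}
    {f : ι → ℝ → ℝ} {g : ℝ → ℝ} (hunif : TendstoUniformlyOn f g l (Icc 0 1))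
    (hg : ContinuousWithinAt g (Icc 0 1) 1) (hg1 : g 1 = 0) {r : ℝ} (hr : 0 < r) :
    ∃ t₀ ∈ Ico (0 : ℝ) 1, (∀ t ∈ Ico t₀ 1, -(t * r) < g t) ∧
      ∀ᶠ n in l, ∀ t ∈ Ico t₀ 1, -(t * r) < f n t := by
  obtain ⟨t₀, ht₀, htail⟩ := exists_Ico_forall_neg_mul_add_lt hg hg1 (half_lt_self hr)
  refine ⟨t₀, ht₀, fun t ht => by linarith [htail t ht], ?_⟩
  filter_upwards [Metric.tendstoUniformlyOn_iff.1 hunif (r / 2) (half_pos hr)] with n hn t ht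
  have hclose := hn t ⟨ht₀.1.trans ht.1, ht.2.le⟩
  rw [Real.dist_eq] at hclose
  linarith [htail t ht, (abs_lt.1 hclose).2]

theorem bddAbove_hoeffdingRatio_and_sSup_eq {h : ℝ → ℝ} {r t₀ : ℝ} (ht₀ : t₀ ∈ Ico (0 : ℝ) 1)
    (hc : ContinuousOn h (Icc 0 t₀)) (h0 : h 0 ≤ 0) (htail : ∀ t ∈ Ico t₀ 1, -(t * r) < h t) :
    BddAbove (hoeffdingRatio r h '' Ico 0 1) ∧
      sSup (hoeffdingRatio r h '' Ico 0 1) = sSup (hoeffdingRatio r h '' Icc 0 t₀) := by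
  set φ := hoeffdingRatio r h
  have hzero : (0 : ℝ) ∈ Icc 0 t₀ := ⟨le_rfl, ht₀.1⟩
  have hsub : Icc 0 t₀ ⊆ Ico (0 : ℝ) 1 := Icc_subset_Ico_right ht₀.2
  have hφ0 : 0 ≤ φ 0 := by simp [φ, hoeffdingRatio, h0]
  have hdom : ∀ y ∈ φ '' Ico 0 1, ∃ z ∈ φ '' Icc 0 t₀, y ≤ z := by
    rintro _ ⟨t, ht, rfl⟩
    rcases le_or_gt t t₀ with hle | hgt
    · exact ⟨φ t, ⟨t, ⟨ht.1, hle⟩, rfl⟩, le_rfl⟩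
    · exact ⟨φ 0, ⟨0, hzero, rfl⟩, (hoeffdingRatio_nonpos ht.2 (htail t ⟨hgt.le, ht.2⟩)).trans hφ0⟩
  have hbdd : BddAbove (φ '' Icc 0 t₀) :=
    (isCompact_Icc.image_of_continuousOn
      (hc.hoeffdingRatio (fun h1 => (h1.2.trans_lt ht₀.2).false) r)).bddAbove
  refine ⟨?_, csSup_eq_csSup_of_forall_exists_le hdom ?_⟩
  · obtain ⟨M, hM⟩ := hbdd
    exact ⟨M, fun y hy => let ⟨_, hz, hyz⟩ := hdom y hy; hyz.trans (hM hz)⟩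
  · exact fun z hz => ⟨z, image_mono hsub hz, le_rfl⟩

theorem hoeffding_sup_convergence (f : ℕ → ℝ → ℝ) (g : ℝ → ℝ)
    (hcont : ∀ n, ContinuousOn (f n) (Set.Icc 0 1))
    (hle : ∀ n, ∀ t ∈ Set.Icc (0 : ℝ) 1, f n t ≤ 0)
    (h1 : ∀ n, f n 1 = 0)
    (hunif : TendstoUniformlyOn f g atTop (Set.Icc 0 1))
    (r : ℝ) (hr : 0 < r) :
    BddAbove ((fun t => (-t * r - g t) / (1 - t)) '' Set.Ico 0 1) ∧
      (∀ n, BddAbove ((fun t => (-t * r - f n t) / (1 - t)) '' Set.Ico 0 1)) ∧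
      Tendsto
        (fun n => sSup ((fun t => (-t * r - f n t) / (1 - t)) '' Set.Ico 0 1))
        atTop
        (nhds (sSup ((fun t => (-t * r - g t) / (1 - t)) '' Set.Ico 0 1))) := by
  show BddAbove (hoeffdingRatio r g '' _) ∧ (∀ n, BddAbove (hoeffdingRatio r (f n) '' _)) ∧
    Tendsto (fun n => sSup (hoeffdingRatio r (f n) '' _)) atTop (𝓝 (sSup (hoeffdingRatio r g '' _)))
  have hI0 : (0 : ℝ) ∈ Icc (0 : ℝ) 1 := ⟨le_rfl, zero_le_one⟩
  have hI1 : (1 : ℝ) ∈ Icc (0 : ℝ) 1 := ⟨zero_le_one, le_rfl⟩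
  have hgc : ContinuousOn g (Icc 0 1) := hunif.continuousOn (.of_forall hcont)
  have hg1 : g 1 = 0 := tendsto_nhds_unique (hunif.tendsto_at hI1) (by simp [h1])
  have hg0 : g 0 ≤ 0 := le_of_tendsto' (hunif.tendsto_at hI0) fun n => hle n 0 hI0
  have hfbdd n : BddAbove (hoeffdingRatio r (f n) '' Ico 0 1) := by
    obtain ⟨t₀, ht₀, htail⟩ := exists_Ico_forall_neg_mul_add_lt (hcont n 1 hI1) (h1 n) hr
    exact (bddAbove_hoeffdingRatio_and_sSup_eq ht₀ ((hcont n).mono (Icc_subset_Icc_right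
      ht₀.2.le)) (hle n 0 hI0) (by simpa using htail)).1
  obtain ⟨t₀, ht₀, hg_tail, hf_tail⟩ :=
    exists_Ico_forall_neg_mul_lt_of_tendstoUniformlyOn hunif (hgc 1 hI1) hg1 hr
  have hIcc : Icc 0 t₀ ⊆ Icc 0 1 := Icc_subset_Icc_right ht₀.2.le
  obtain ⟨hgbdd, hgsup⟩ := bddAbove_hoeffdingRatio_and_sSup_eq ht₀ (hgc.mono hIcc) hg0 hg_tail
  have hsub : Icc 0 t₀ ⊆ Ico (0 : ℝ) 1 := Icc_subset_Ico_right ht₀.2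
  refine ⟨hgbdd, hfbdd, ?_⟩
  rw [hgsup]
  refine (((hunif.mono hIcc).hoeffdingRatio (fun t ht => ht.2) ht₀.2 r).tendsto_sSup_image
    (nonempty_Icc.2 ht₀.1) (.of_forall fun n => (hfbdd n).mono (image_mono hsub))
    (hgbdd.mono (image_mono hsub))).congr' ?_
  filter_upwards [hf_tail] with n hn
  exact (bddAbove_hoeffdingRatio_and_sSup_eq ht₀ ((hcont n).mono hIcc) (hle n 0 hI0) hn).2.symm
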